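/- arXiv:1110.1013 — 8 statements merged into one kernel-verified Lean document; each statement's English description precedes it below -/
import Mathlib

section
/- With the notation below, for every nonzero scalar c, the product of the matrices f_1^{(c)}, f_2^{(c)}, …, f_n^{(c)} (in this order) satisfies U · (f_1^{(c)} f_2^{(c)} ⋯ f_n^{(c)}) = −c · Uᵀ; equivalently, since U is invertible, f_1^{(c)} f_2^{(c)} ⋯ f_n^{(c)} = −c · U⁻¹ Uᵀ. -/
/-!
Right multiplication by `f_k`, which differs from `1` only in row `k`, adds to every column `j`
the multiple `f_k k j - δ_kj` of column `k`. By induction, `U · f₀ ⋯ f_{k-1}` has its first `k`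
rows equal to those of `-c • Uᵀ` and the remaining ones equal to those of `U`. Its column `k` is
then `s k • e_k`, so multiplying by `f_k` changes only row `k`, and since `s k ^ 2 = 1` and `A` is
symmetric that row becomes row `k` of `-c • Uᵀ`.
-/

open Matrix

noncomputable section

/-- The strictly upper-triangular part `A⁺` of a matrix `A`. -/
def Aplus (n : ℕ) (A : Matrix (Fin n) (Fin n) ℝ) : Matrix (Fin n) (Fin n) ℝ :=
  fun i j => if i < j then A i j else 0

/-- `U = I_s − A⁺`. -/
def Umat (n : ℕ) (A : Matrix (Fin n) (Fin n) ℝ) (s : Fin n → ℝ) :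
    Matrix (Fin n) (Fin n) ℝ :=
  Matrix.diagonal s - Aplus n A

/-- The matrix `f_i^{(c)}`: it agrees with the identity except in row `i`, where
`(f_i^{(c)})_{ii} = −c`, `(f_i^{(c)})_{ij} = s(i)·a_{ij}` for `i < j`, and
`(f_i^{(c)})_{ij} = c·s(i)·a_{ij}` for `i > j`. -/
def fMat (n : ℕ) (A : Matrix (Fin n) (Fin n) ℝ) (s : Fin n → ℝ) (c : ℝ) (i : Fin n) :
    Matrix (Fin n) (Fin n) ℝ :=
  fun j k =>
    if j = i then
      (if k = i then -c else if i < k then s i * A i k else c * s i * A i k)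
    else (if j = k then 1 else 0)

theorem Matrix.mul_apply_of_eq_one_of_ne {m R : Type*} [Fintype m] [DecidableEq m] [Ring R]
    (M F : Matrix m m R) (k : m) (hF : ∀ l, l ≠ k → F l = (1 : Matrix m m R) l) (i j : m) :
    (M * F) i j = M i j + M i k * (F k j - (1 : Matrix m m R) k j) := by
  have hsingle : (M * (F - 1)) i j = M i k * (F - 1) k j :=
    Finset.sum_eq_single k (fun l _ hl => by simp [sub_apply, hF l hl]) (by simp)
  calc (M * F) i j = (M * 1 : Matrix m m R) i j + (M * (F - 1)) i j := by
        rw [← add_apply, ← Matrix.mul_add, add_sub_cancel]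
    _ = M i j + M i k * (F k j - (1 : Matrix m m R) k j) := by
        rw [Matrix.mul_one, hsingle, sub_apply]

section

variable {n : ℕ} {A : Matrix (Fin n) (Fin n) ℝ} {s : Fin n → ℝ} {c : ℝ}

theorem Umat_apply (i j : Fin n) :
    Umat n A s i j = if i = j then s i else if i < j then -A i j else 0 := by
  rcases lt_trichotomy i j with h | rfl | h
  · simp [Umat, Aplus, diagonal, h, h.ne]
  · simp [Umat, Aplus]
  · simp [Umat, Aplus, diagonal, h.ne', h.not_gt]

theorem Umat_isUpperTriangular : (Umat n A s).IsUpperTriangular := fun i j (hij : j < i) => by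
  rw [Umat_apply, if_neg hij.ne', if_neg hij.not_gt]

theorem isUnit_det_Umat (hs : ∀ i, s i * s i = 1) : IsUnit (Umat n A s).det := by
  rw [det_of_isUpperTriangular Umat_isUpperTriangular]
  refine IsUnit.mk0 _ (Finset.prod_ne_zero_iff.mpr fun i _ => ?_)
  rw [Umat_apply, if_pos rfl]
  exact left_ne_zero_of_mul_eq_one (hs i)

theorem fMat_apply_of_ne {k l : Fin n} (hl : l ≠ k) :
    fMat n A s c k l = (1 : Matrix (Fin n) (Fin n) ℝ) l := by
  ext j
  simp [fMat, hl, one_apply]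

theorem s_mul_fMat_row_sub_one (hsym : ∀ i j, A i j = A j i) (hs : ∀ i, s i * s i = 1)
    (k j : Fin n) :
    s k * (fMat n A s c k k j - (1 : Matrix (Fin n) (Fin n) ℝ) k j)
      = -c * Umat n A s j k - Umat n A s k j := by
  rcases lt_trichotomy j k with h | rfl | h
  · simp only [fMat, Umat_apply, one_apply, h.ne, h.ne', h, h.not_gt, if_true, if_false,
      hsym j k]
    linear_combination (c * A k j) * hs k
  · simp only [fMat, Umat_apply, one_apply, if_true]
    ring
  · simp only [fMat, Umat_apply, one_apply, h.ne, h.ne', h, h.not_gt, if_true, if_false]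
    linear_combination A k j * hs k

/-- Closed form of `U · f₀ ⋯ f_{k-1}`. -/
def partialProd (n : ℕ) (A : Matrix (Fin n) (Fin n) ℝ) (s : Fin n → ℝ) (c : ℝ) (k : ℕ) :
    Matrix (Fin n) (Fin n) ℝ :=
  fun i j => if i.val < k then -c * Umat n A s j i else Umat n A s i j

theorem partialProd_apply_self {k : Fin n} (i : Fin n) :
    partialProd n A s c k i k = if i = k then s k else 0 := by
  rcases lt_trichotomy i k with h | rfl | h
  · simp [partialProd, Umat_apply, h, h.ne, h.ne', h.not_gt]
  · simp [partialProd, Umat_apply]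
  · simp [partialProd, Umat_apply, h.ne', h.not_gt, Fin.lt_def.not.mp h.not_gt]

theorem partialProd_mul_fMat (hsym : ∀ i j, A i j = A j i) (hs : ∀ i, s i * s i = 1)
    (k : Fin n) :
    partialProd n A s c k * fMat n A s c k = partialProd n A s c (k + 1) := by
  ext i j
  rw [mul_apply_of_eq_one_of_ne _ _ k (fun l hl => fMat_apply_of_ne hl), partialProd_apply_self]
  by_cases hik : i = k
  · subst hik
    rw [if_pos rfl, s_mul_fMat_row_sub_one hsym hs]
    simp [partialProd]
  · have hlt : i.val < k.val + 1 ↔ i.val < k.val := by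
      have := Fin.val_ne_of_ne hik
      omega
    simp [partialProd, hik, hlt]

theorem Umat_mul_prod_take_fMat (hsym : ∀ i j, A i j = A j i) (hs : ∀ i, s i * s i = 1) :
    ∀ k ≤ n, Umat n A s * (((List.finRange n).map (fMat n A s c)).take k).prod
      = partialProd n A s c k
  | 0, _ => by ext i j; simp [partialProd]
  | k + 1, hk => by
    rw [List.prod_take_succ _ _ (by simpa using hk), ← Matrix.mul_assoc,
      Umat_mul_prod_take_fMat hsym hs k (by omega)]
    simpa using partialProd_mul_fMat hsym hs ⟨k, hk⟩

end

theorem stmt_0_general (n : ℕ) (A : Matrix (Fin n) (Fin n) ℝ)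
    (hsym : ∀ i j, A i j = A j i)
    (s : Fin n → ℝ) (hs : ∀ i, s i = 1 ∨ s i = -1)
    (c : ℝ) :
    Umat n A s * ((List.finRange n).map (fMat n A s c)).prod = (-c) • (Umat n A s)ᵀ ∧
    ((List.finRange n).map (fMat n A s c)).prod
      = (-c) • ((Umat n A s)⁻¹ * (Umat n A s)ᵀ) := by
  have hss : ∀ i, s i * s i = 1 := fun i => by rcases hs i with h | h <;> simp [h]
  have hprod : Umat n A s * ((List.finRange n).map (fMat n A s c)).prod
      = (-c) • (Umat n A s)ᵀ := by
    have h := Umat_mul_prod_take_fMat (c := c) hsym hss n le_rfl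
    rw [List.take_of_length_le (by simp)] at h
    rw [h]
    ext i j
    simp [partialProd]
  refine ⟨hprod, ?_⟩
  rw [← Matrix.mul_smul, ← hprod, nonsing_inv_mul_cancel_left _ _ (isUnit_det_Umat hss)]

theorem stmt_0 (n : ℕ) (hn : 1 ≤ n) (A : Matrix (Fin n) (Fin n) ℝ)
    (hsym : ∀ i j, A i j = A j i) (hdiag : ∀ i, A i i = 0)
    (h01 : ∀ i j, A i j = 0 ∨ A i j = 1)
    (s : Fin n → ℝ) (hs : ∀ i, s i = 1 ∨ s i = -1)
    (c : ℝ) (hc : c ≠ 0) :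
    Umat n A s * ((List.finRange n).map (fMat n A s c)).prod = (-c) • (Umat n A s)ᵀ ∧
    ((List.finRange n).map (fMat n A s c)).prod
      = (-c) • ((Umat n A s)⁻¹ * (Umat n A s)ᵀ) :=
  stmt_0_general n A hsym s hs c

end
end

section
/- With the notation below, the Artin element satisfies ρ(σ_{Γ,s}) = ρ_1^{s(1)} ρ_2^{s(2)} ⋯ ρ_n^{s(n)} = U⁻¹ Uᵀ. -/
open Matrix

noncomputable section

/-- The Artin generator `ρ_i`: it agrees with the identity except in row `i`,
where `(ρ_i)_{ii} = 1`, `(ρ_i)_{ij} = a_{ij}` for `i < j`, and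
`(ρ_i)_{ij} = −a_{ij}` for `i > j`. -/
def artinGen (n : ℕ) (A : Matrix (Fin n) (Fin n) ℝ) (i : Fin n) :
    Matrix (Fin n) (Fin n) ℝ :=
  fun j k =>
    if j = i then (if k = i then 1 else if i < k then A i k else -A i k)
    else (if j = k then 1 else 0)

/-- `ρ_i^{s(i)}`, for `s(i) ∈ {+1, −1}`: the generator itself if `s(i) = 1`,
and its matrix inverse if `s(i) = −1`. -/
def artinGenPow (n : ℕ) (A : Matrix (Fin n) (Fin n) ℝ) (s : Fin n → ℝ) (i : Fin n) :
    Matrix (Fin n) (Fin n) ℝ :=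
  if s i = 1 then artinGen n A i else (artinGen n A i)⁻¹

/-!
Write `ρ_i^{s(i)} = 1 + s(i) • e_i r_iᵀ`, where `r_i` is the off-diagonal part of row `i` of `ρ_i`
(the inverse formula holds because `e_i r_iᵀ` squares to zero). Multiplying `U` on the right by
`ρ_1^{s(1)}, …, ρ_k^{s(k)}` replaces its first `k` rows by those of `Uᵀ`: since `U` is upper
triangular, column `k` of the intermediate matrix is `s(k) e_k`, so the next factor adds
`s(k)² r_kᵀ = r_kᵀ` to row `k` alone, and row `k` of `U` plus `r_k` is column `k` of `U` by the
symmetry of `A`. Hence `U ρ(σ_{Γ,s}) = Uᵀ`.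
-/

theorem Matrix.inv_one_add_eq_one_sub_of_mul_self_eq_zero {m R : Type*} [Fintype m]
    [DecidableEq m] [CommRing R] {N : Matrix m m R} (h : N * N = 0) : (1 + N)⁻¹ = 1 - N :=
  inv_eq_right_inv (by rw [add_mul, one_mul, mul_sub, mul_one, h, sub_zero, sub_add_cancel])

namespace ArtinElement

section TransposeRows

variable {n : ℕ} {R : Type*}

def transposeRowsLT (M : Matrix (Fin n) (Fin n) R) (m : ℕ) : Matrix (Fin n) (Fin n) R :=
  of fun i j => if (i : ℕ) < m then M j i else M i j

variable (M : Matrix (Fin n) (Fin n) R)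

@[simp]
lemma transposeRowsLT_zero : transposeRowsLT M 0 = M := by
  ext i j; simp [transposeRowsLT]

lemma transposeRowsLT_of_le {m : ℕ} (h : n ≤ m) : transposeRowsLT M m = Mᵀ := by
  ext i j; simp [transposeRowsLT, i.isLt.trans_le h]

variable [CommRing R]

lemma transposeRowsLT_mulVec_single {M : Matrix (Fin n) (Fin n) R}
    (hM : M.IsUpperTriangular) (k : Fin n) :
    transposeRowsLT M k *ᵥ Pi.single k 1 = Pi.single k (M k k) := by
  ext i
  rw [mulVec_single_one]
  rcases lt_trichotomy i k with h | rfl | h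
  · simp [transposeRowsLT, h, h.ne, hM h]
  · simp [transposeRowsLT]
  · simp [transposeRowsLT, h.not_gt, h.ne', hM h]

lemma transposeRowsLT_add_vecMulVec_single {k : Fin n} {r : Fin n → R}
    (hr : ∀ j, M k j + r j = M j k) :
    transposeRowsLT M k + vecMulVec (Pi.single k 1) r = transposeRowsLT M (k + 1) := by
  ext i j
  rcases lt_trichotomy i k with h | rfl | h
  · simp [transposeRowsLT, vecMulVec_apply, h, h.ne, h.not_gt]
  · simp [transposeRowsLT, vecMulVec_apply, hr]
  · simp [transposeRowsLT, vecMulVec_apply, h.not_gt, h.ne', h.not_ge]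

lemma transposeRowsLT_mul_one_add_smul_vecMulVec {M : Matrix (Fin n) (Fin n) R}
    (hM : M.IsUpperTriangular) {k : Fin n} {c : R} {r : Fin n → R} (hc : c * M k k = 1)
    (hr : ∀ j, M k j + r j = M j k) :
    transposeRowsLT M k * (1 + c • vecMulVec (Pi.single k 1) r) = transposeRowsLT M (k + 1) := by
  rw [mul_add, mul_one, Matrix.mul_smul, mul_vecMulVec, transposeRowsLT_mulVec_single hM,
    ← smul_vecMulVec, ← Pi.single_smul, smul_eq_mul, hc,
    transposeRowsLT_add_vecMulVec_single M hr]

end TransposeRows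

variable {n : ℕ} (A : Matrix (Fin n) (Fin n) ℝ) (s : Fin n → ℝ)

def offRow (i : Fin n) : Fin n → ℝ :=
  fun k => if i < k then A i k else if k < i then -A i k else 0

def nilPart (i : Fin n) : Matrix (Fin n) (Fin n) ℝ :=
  vecMulVec (Pi.single i 1) (offRow A i)

lemma artinGen_eq_one_add_nilPart (i : Fin n) : artinGen n A i = 1 + nilPart A i := by
  ext j k
  rcases eq_or_ne j i with rfl | hj
  · rcases lt_trichotomy j k with h | rfl | h
    · simp [artinGen, nilPart, offRow, vecMulVec_apply, h, h.ne, h.ne', one_apply]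
    · simp [artinGen, nilPart, offRow, vecMulVec_apply]
    · simp [artinGen, nilPart, offRow, vecMulVec_apply, h, h.ne, h.ne', h.not_gt, one_apply]
  · simp [artinGen, nilPart, vecMulVec_apply, hj, one_apply]

lemma nilPart_mul_self (i : Fin n) : nilPart A i * nilPart A i = 0 := by
  simp [nilPart, vecMulVec_mul_vecMulVec, offRow]

lemma artinGenPow_eq_one_add_smul {i : Fin n} (hs : s i = 1 ∨ s i = -1) :
    artinGenPow n A s i = 1 + s i • nilPart A i := by
  rw [artinGenPow, artinGen_eq_one_add_nilPart]
  rcases hs with h | h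
  · simp [h]
  · rw [if_neg (by rw [h]; norm_num), inv_one_add_eq_one_sub_of_mul_self_eq_zero
      (nilPart_mul_self A i), h, neg_one_smul, sub_eq_add_neg]

lemma Umat_apply (i j : Fin n) :
    Umat n A s i j = (if i = j then s i else 0) - (if i < j then A i j else 0) := by
  simp [Umat, Aplus, diagonal_apply]

lemma Umat_isUpperTriangular : (Umat n A s).IsUpperTriangular := by
  intro i j (h : j < i)
  simp [Umat_apply, h.ne', h.not_gt]

lemma isUnit_det_Umat (hs : ∀ i, s i = 1 ∨ s i = -1) : IsUnit (Umat n A s).det := by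
  rw [det_of_isUpperTriangular (Umat_isUpperTriangular A s), isUnit_iff_ne_zero,
    Finset.prod_ne_zero_iff]
  intro i _
  rcases hs i with h | h <;> simp [Umat_apply, h]

lemma Umat_apply_add_offRow (hsym : ∀ i j, A i j = A j i) (k j : Fin n) :
    Umat n A s k j + offRow A k j = Umat n A s j k := by
  rcases lt_trichotomy k j with h | rfl | h
  · simp [Umat_apply, offRow, h, h.ne, h.ne', h.not_gt]
  · simp [Umat_apply, offRow]
  · simp [Umat_apply, offRow, h, h.ne, h.ne', h.not_gt, hsym k j]

lemma Umat_mul_prod_take (hsym : ∀ i j, A i j = A j i) (hs : ∀ i, s i = 1 ∨ s i = -1)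
    {m : ℕ} (hm : m ≤ n) :
    Umat n A s * (((List.finRange n).map (artinGenPow n A s)).take m).prod
      = transposeRowsLT (Umat n A s) m := by
  induction m with
  | zero => simp
  | succ m ih =>
    rw [List.prod_take_succ _ _ (by simpa using hm), ← mul_assoc, ih (by omega)]
    simp only [List.getElem_map, List.getElem_finRange, Fin.cast_mk]
    rw [artinGenPow_eq_one_add_smul A s (hs _), nilPart]
    refine transposeRowsLT_mul_one_add_smul_vecMulVec (k := ⟨m, by omega⟩)
      (Umat_isUpperTriangular A s) ?_ (Umat_apply_add_offRow A s hsym _)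
    rcases hs ⟨m, by omega⟩ with h | h <;> simp [Umat_apply, h]

end ArtinElement

open ArtinElement in
theorem stmt_2_general (n : ℕ) (A : Matrix (Fin n) (Fin n) ℝ)
    (hsym : ∀ i j, A i j = A j i)
    (s : Fin n → ℝ) (hs : ∀ i, s i = 1 ∨ s i = -1) :
    ((List.finRange n).map (artinGenPow n A s)).prod
      = (Umat n A s)⁻¹ * (Umat n A s)ᵀ := by
  have h := Umat_mul_prod_take A s hsym hs le_rfl
  rw [List.take_of_length_le (by simp), transposeRowsLT_of_le _ le_rfl] at h
  rw [← h, ← mul_assoc, nonsing_inv_mul _ (isUnit_det_Umat A s hs), one_mul]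

theorem stmt_2 (n : ℕ) (hn : 1 ≤ n) (A : Matrix (Fin n) (Fin n) ℝ)
    (hsym : ∀ i j, A i j = A j i) (hdiag : ∀ i, A i i = 0)
    (h01 : ∀ i j, A i j = 0 ∨ A i j = 1)
    (s : Fin n → ℝ) (hs : ∀ i, s i = 1 ∨ s i = -1) :
    ((List.finRange n).map (artinGenPow n A s)).prod
      = (Umat n A s)⁻¹ * (Umat n A s)ᵀ :=
  stmt_2_general n A hsym s hs

end
end

section
/- With the notation below, the mixed-sign Coxeter element and the Artin element are related by ω_{Γ,s} = −ρ(σ_{Γ,s}), that is, s_1 s_2 ⋯ s_n = −(ρ_1^{s(1)} ρ_2^{s(2)} ⋯ ρ_n^{s(n)}). -/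
open Matrix

noncomputable section

/-- The Coxeter generator `s_i`: it agrees with the identity except in row `i`,
where `(s_i)_{ii} = −1` and `(s_i)_{ij} = s(i)·a_{ij}` for `j ≠ i`. -/
def coxGen (n : ℕ) (A : Matrix (Fin n) (Fin n) ℝ) (s : Fin n → ℝ) (i : Fin n) :
    Matrix (Fin n) (Fin n) ℝ :=
  fun j k =>
    if j = i then (if k = i then -1 else s i * A i k)
    else (if j = k then 1 else 0)

/-- the nilpotent part of `artinGen` -/
def artinNil (n : ℕ) (A : Matrix (Fin n) (Fin n) ℝ) (i : Fin n) :
    Matrix (Fin n) (Fin n) ℝ :=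
  vecMulVec (Pi.single i 1) (fun k => if k = i then 0 else if i < k then A i k else -A i k)

lemma artinNil_apply (n : ℕ) (A : Matrix (Fin n) (Fin n) ℝ) (i j k : Fin n) :
    artinNil n A i j k =
      if j = i then (if k = i then 0 else if i < k then A i k else -A i k) else 0 := by
  simp only [artinNil, vecMulVec, Matrix.of_apply, Pi.single_apply]
  by_cases h : j = i <;> simp [h]

lemma artinGen_eq (n : ℕ) (A : Matrix (Fin n) (Fin n) ℝ) (i : Fin n) :
    artinGen n A i = 1 + artinNil n A i := by
  ext j k
  simp only [artinGen, Matrix.add_apply, Matrix.one_apply, artinNil_apply]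
  split_ifs <;> simp_all

lemma artinNil_sq (n : ℕ) (A : Matrix (Fin n) (Fin n) ℝ) (i : Fin n) :
    artinNil n A i * artinNil n A i = 0 := by
  ext j k
  rw [Matrix.mul_apply]
  simp only [Matrix.zero_apply]
  apply Finset.sum_eq_zero
  intro m _
  rw [artinNil_apply, artinNil_apply]
  by_cases hm : m = i
  · simp [hm]
  · simp [hm]

lemma artinGen_inv (n : ℕ) (A : Matrix (Fin n) (Fin n) ℝ) (i : Fin n) :
    (artinGen n A i)⁻¹ = 1 - artinNil n A i := by
  apply Matrix.inv_eq_right_inv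
  rw [artinGen_eq]
  have h := artinNil_sq n A i
  have e : (1 + artinNil n A i) * (1 - artinNil n A i)
      = 1 - artinNil n A i * artinNil n A i := by noncomm_ring
  rw [e, h, sub_zero]

lemma artinGenPow_eq (n : ℕ) (A : Matrix (Fin n) (Fin n) ℝ) (s : Fin n → ℝ) (i : Fin n)
    (hs : s i = 1 ∨ s i = -1) :
    artinGenPow n A s i = 1 + s i • artinNil n A i := by
  rcases hs with h | h
  · rw [artinGenPow, if_pos h, artinGen_eq, h, one_smul]
  · rw [artinGenPow, if_neg (by rw [h]; norm_num), artinGen_inv, h, neg_one_smul,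
      sub_eq_add_neg]

/-- diagonal matrix with `-1` on the first `k` indices. -/
def Dm (n k : ℕ) : Matrix (Fin n) (Fin n) ℝ :=
  diagonal (fun j => if (j : ℕ) < k then -1 else 1)

lemma Dm_zero (n : ℕ) : Dm n 0 = 1 := by
  simp [Dm, Matrix.diagonal_one]

lemma Dm_n (n : ℕ) : Dm n n = -1 := by
  unfold Dm
  have : (fun j : Fin n => if (j : ℕ) < n then (-1 : ℝ) else 1) = fun _ => -1 := by
    funext j; simp [j.isLt]
  rw [this]
  ext a b
  by_cases h : a = b <;> simp [Matrix.diagonal_apply, h, Matrix.one_apply]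

lemma key (n : ℕ) (A : Matrix (Fin n) (Fin n) ℝ) (s : Fin n → ℝ) (i : Fin n)
    (hs : s i = 1 ∨ s i = -1) :
    Dm n i * coxGen n A s i = artinGenPow n A s i * Dm n (i + 1) := by
  rw [artinGenPow_eq n A s i hs]
  ext a b
  rw [Dm, Dm, diagonal_mul, mul_diagonal]
  simp only [coxGen, Matrix.add_apply, Matrix.one_apply, Matrix.smul_apply, artinNil_apply,
    smul_eq_mul]
  by_cases ha : a = i
  · subst ha
    simp only [if_pos rfl, lt_irrefl, if_neg (lt_irrefl (a : ℕ))]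
    by_cases hb : b = a
    · subst hb
      simp [Nat.lt_succ_self]
    · have hab : ¬ (a = b) := fun h => hb h.symm
      simp only [if_neg hb, if_neg hab]
      by_cases hlt : a < b
      · have h1 : (a : ℕ) < (b : ℕ) := hlt
        have h2 : ¬ ((b : ℕ) < (a : ℕ) + 1) := by omega
        simp [hlt, h2]
      · have h1 : (b : ℕ) < (a : ℕ) := by
          rcases lt_trichotomy a b with h | h | h
          · exact absurd h hlt
          · exact absurd h.symm hb
          · exact h
        have h2 : (b : ℕ) < (a : ℕ) + 1 := by omega
        simp only [if_neg hlt, if_pos h2]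
        norm_num
  · simp only [if_neg ha]
    by_cases hab : a = b
    · subst hab
      have : ((a : ℕ) < (i : ℕ)) ↔ ((a : ℕ) < (i : ℕ) + 1) := by
        constructor
        · intro h; omega
        · intro h
          rcases Nat.lt_succ_iff_lt_or_eq.mp h with h | h
          · exact h
          · exact absurd (Fin.ext h) ha
      simp [this]
    · simp [hab]

theorem stmt_3 (n : ℕ) (hn : 1 ≤ n) (A : Matrix (Fin n) (Fin n) ℝ)
    (hsym : ∀ i j, A i j = A j i) (hdiag : ∀ i, A i i = 0)
    (h01 : ∀ i j, A i j = 0 ∨ A i j = 1)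
    (s : Fin n → ℝ) (hs : ∀ i, s i = 1 ∨ s i = -1) :
    ((List.finRange n).map (coxGen n A s)).prod
      = -(((List.finRange n).map (artinGenPow n A s)).prod) := by
  have main : ∀ k, k ≤ n →
      (((List.finRange n).map (coxGen n A s)).take k).prod
        = (((List.finRange n).map (artinGenPow n A s)).take k).prod * Dm n k := by
    intro k
    induction k with
    | zero => intro _; simp [Dm_zero]
    | succ k ih =>
      intro hk
      have hk' : k ≤ n := Nat.le_of_succ_le hk
      have hlen : ∀ f : Fin n → Matrix (Fin n) (Fin n) ℝ,
          k < ((List.finRange n).map f).length := by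
        intro f; rw [List.length_map, List.length_finRange]; omega
      have hget : ∀ f : Fin n → Matrix (Fin n) (Fin n) ℝ,
          ((List.finRange n).map f)[k]? = some (f ⟨k, by omega⟩) := by
        intro f
        rw [List.getElem?_eq_getElem (hlen f), List.getElem_map, List.getElem_finRange]
        rfl
      rw [List.take_succ, List.take_succ, hget, hget]
      simp only [Option.toList_some, List.prod_append, List.prod_cons, List.prod_nil, mul_one]
      rw [ih hk', mul_assoc, mul_assoc]
      congr 1
      have := key n A s ⟨k, by omega⟩ (hs _)
      simpa using this
  have hfin := main n (le_refl n)
  have hf1 : ((List.finRange n).map (coxGen n A s)).take n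
      = (List.finRange n).map (coxGen n A s) := List.take_of_length_le (by simp)
  have hf2 : ((List.finRange n).map (artinGenPow n A s)).take n
      = (List.finRange n).map (artinGenPow n A s) := List.take_of_length_le (by simp)
  rw [hf1, hf2, Dm_n, mul_neg_one] at hfin
  exact hfin

end
end

section
/- With the notation below, let F = A⁺ − (A⁺)ᵀ. Then for every i ∈ {1,…,n}, the Artin generator ρ_i preserves the skew-symmetric bilinear form F, i.e. ρ_iᵀ · F · ρ_i = F. -/
/-
Writing `F = A⁺ − (A⁺)ᵀ`, symmetry of `A` makes row `i` of `ρ_i − 1` equal to row `i` of `F`, so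
`ρ_i = 1 + e_i (e_iᵀ F)` is the symplectic transvection `x ↦ x + F(e_i, x) e_i`. A transvection
`1 + u (uᵀ F)` along an `F`-isotropic vector `u` preserves any skew form `F`: the two cross terms
cancel by skew-symmetry and the quadratic term carries the factor `uᵀ F u = 0`.
-/

open Matrix

noncomputable section

theorem Matrix.transpose_mul_mul_one_add_vecMulVec_of_isotropic
    {R ι : Type*} [CommRing R] [Fintype ι] [DecidableEq ι]
    {F : Matrix ι ι R} (hF : Fᵀ = -F) {u : ι → R} (hu : u ⬝ᵥ F *ᵥ u = 0) :
    (1 + vecMulVec u (u ᵥ* F))ᵀ * F * (1 + vecMulVec u (u ᵥ* F)) = F := by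
  set w := u ᵥ* F
  have hFu : F *ᵥ u = -w := by
    rw [← vecMul_transpose, hF, vecMul_neg]
  have hwu : w ⬝ᵥ u = 0 := by rw [← dotProduct_mulVec, hu]
  calc (1 + vecMulVec u w)ᵀ * F * (1 + vecMulVec u w)
      = F + vecMulVec w u * F + F * vecMulVec u w + vecMulVec w u * F * vecMulVec u w := by
        rw [transpose_add, transpose_one, transpose_vecMulVec]; noncomm_ring
    _ = F + vecMulVec w w - vecMulVec w w + vecMulVec w ((w ⬝ᵥ u) • w) := by
        rw [vecMulVec_mul, mul_vecMulVec, hFu, neg_vecMulVec, vecMulVec_mul_vecMulVec,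
          sub_eq_add_neg]
    _ = F := by rw [hwu, zero_smul, vecMulVec_zero, add_sub_cancel_right, add_zero]

theorem artinGen_eq_one_add_vecMulVec {n : ℕ} {A : Matrix (Fin n) (Fin n) ℝ}
    (hsym : ∀ i j, A i j = A j i) (i : Fin n) :
    artinGen n A i =
      1 + vecMulVec (Pi.single i 1) (Pi.single i 1 ᵥ* (Aplus n A - (Aplus n A)ᵀ)) := by
  ext j k
  rw [single_one_vecMul]
  by_cases hj : j = i
  · subst hj
    rcases lt_trichotomy j k with h | rfl | h
    · simp [artinGen, Aplus, vecMulVec_apply, h, h.ne', not_lt.2 h.le, one_apply_ne h.ne]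
    · simp [artinGen, Aplus, vecMulVec_apply]
    · simp [artinGen, Aplus, vecMulVec_apply, h, h.ne, not_lt.2 h.le, hsym j k,
        one_apply_ne h.ne']
  · simp [artinGen, vecMulVec_apply, hj, one_apply]

theorem stmt_5_general (n : ℕ) (A : Matrix (Fin n) (Fin n) ℝ)
    (hsym : ∀ i j, A i j = A j i)
    (F : Matrix (Fin n) (Fin n) ℝ) (hF : F = Aplus n A - (Aplus n A)ᵀ) :
    ∀ i : Fin n, (artinGen n A i)ᵀ * F * artinGen n A i = F := by
  intro i
  have hskew : Fᵀ = -F := by rw [hF, transpose_sub, transpose_transpose, neg_sub]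
  rw [artinGen_eq_one_add_vecMulVec hsym, ← hF]
  refine transpose_mul_mul_one_add_vecMulVec_of_isotropic hskew ?_
  rw [single_one_dotProduct, mulVec_single_one]
  simp [hF]

theorem stmt_5 (n : ℕ) (hn : 1 ≤ n) (A : Matrix (Fin n) (Fin n) ℝ)
    (hsym : ∀ i j, A i j = A j i) (hdiag : ∀ i, A i i = 0)
    (h01 : ∀ i j, A i j = 0 ∨ A i j = 1)
    (s : Fin n → ℝ) (hs : ∀ i, s i = 1 ∨ s i = -1)
    (F : Matrix (Fin n) (Fin n) ℝ) (hF : F = Aplus n A - (Aplus n A)ᵀ) :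
    ∀ i : Fin n, (artinGen n A i)ᵀ * F * artinGen n A i = F :=
  stmt_5_general n A hsym F hF

end
end

section
/- With the notation below, suppose i ≠ j, the vertices v_i and v_j are adjacent (a_{ij} = 1), and the signs are opposite (s(i) = −s(j)). Then the matrix s_i · s_j has infinite order: for every positive integer m, (s_i s_j)^m ≠ I. -/
open Matrix

noncomputable section

lemma sum_two_aux {n : ℕ} (i j : Fin n) (hij : i ≠ j) (f : Fin n → ℝ)
    (h : ∀ l, l ≠ i → l ≠ j → f l = 0) :
    ∑ l, f l = f i + f j := by
  rw [← Finset.sum_subset (Finset.subset_univ ({i, j} : Finset (Fin n)))]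
  · rw [Finset.sum_pair hij]
  · intro x _ hx
    simp only [Finset.mem_insert, Finset.mem_singleton, not_or] at hx
    exact h x hx.1 hx.2

theorem stmt_7 (n : ℕ) (hn : 1 ≤ n) (A : Matrix (Fin n) (Fin n) ℝ)
    (hsym : ∀ i j, A i j = A j i) (hdiag : ∀ i, A i i = 0)
    (h01 : ∀ i j, A i j = 0 ∨ A i j = 1)
    (s : Fin n → ℝ) (hs : ∀ i, s i = 1 ∨ s i = -1)
    (i j : Fin n) (hij : i ≠ j) (hadj : A i j = 1) (hsign : s i = -s j) :
    ∀ m : ℕ, 0 < m → (coxGen n A s i * coxGen n A s j) ^ m ≠ 1 := by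
  have hsij : s i * s j = -1 := by
    rcases hs j with h | h <;> rw [hsign, h] <;> ring
  set P := coxGen n A s i * coxGen n A s j with hP
  set B : Matrix (Fin 2) (Fin 2) ℝ := !![-2, -(s i); s j, -1] with hB
  -- columns i and j of P
  have hcol : ∀ k, P k i = (if k = i then -2 else if k = j then s j else 0)
      ∧ P k j = (if k = i then -(s i) else if k = j then -1 else 0) := by
    intro k
    have e1 : P k i = coxGen n A s i k i * coxGen n A s j i i
        + coxGen n A s i k j * coxGen n A s j j i := by
      rw [hP, mul_apply]
      exact sum_two_aux i j hij _ (fun l hl1 hl2 => by simp [coxGen, hl2, hl1, Ne.symm hl1])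
    have e2 : P k j = coxGen n A s i k i * coxGen n A s j i j
        + coxGen n A s i k j * coxGen n A s j j j := by
      rw [hP, mul_apply]
      exact sum_two_aux i j hij _ (fun l hl1 hl2 => by simp [coxGen, hl2, hl1, Ne.symm hl2])
    constructor
    · rw [e1]
      by_cases hk : k = i
      · simp [coxGen, hk, hij, Ne.symm hij, hsym j i, hadj]; nlinarith [hsij]
      · by_cases hk' : k = j
        · simp [coxGen, hk', hij, Ne.symm hij, hsym j i, hadj, hk]
        · simp [coxGen, hij, Ne.symm hij, hk, hk']
    · rw [e2]
      by_cases hk : k = i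
      · simp [coxGen, hk, hij, Ne.symm hij, hadj]
      · by_cases hk' : k = j
        · simp [coxGen, hk', hij, Ne.symm hij, hk]
        · simp [coxGen, hij, Ne.symm hij, hk, hk']
  -- the span of e_i, e_j is invariant under P, with 2×2 block B
  have key : ∀ m, ∀ k,
      (P ^ m) k i = (if k = i then (B ^ m) 0 0 else if k = j then (B ^ m) 1 0 else 0)
      ∧ (P ^ m) k j = (if k = i then (B ^ m) 0 1 else if k = j then (B ^ m) 1 1 else 0) := by
    intro m
    induction m with
    | zero =>
      intro k
      by_cases hk : k = i
      · simp [hk, one_apply, hij, Ne.symm hij]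
      · by_cases hk' : k = j
        · simp [hk', one_apply, hij, Ne.symm hij, hk]
        · simp [one_apply, hk, hk', Ne.symm hk, Ne.symm hk']
    | succ m ih =>
      intro k
      have e1 : (P ^ (m+1)) k i = (P ^ m) k i * P i i + (P ^ m) k j * P j i := by
        rw [pow_succ, mul_apply]
        exact sum_two_aux i j hij _ (fun l hl1 hl2 => by
          rw [(hcol l).1]; simp [hl1, hl2])
      have e2 : (P ^ (m+1)) k j = (P ^ m) k i * P i j + (P ^ m) k j * P j j := by
        rw [pow_succ, mul_apply]
        exact sum_two_aux i j hij _ (fun l hl1 hl2 => by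
          rw [(hcol l).2]; simp [hl1, hl2])
      have b1 : ∀ a : Fin 2, (B ^ (m+1)) a 0 = (B ^ m) a 0 * (-2) + (B ^ m) a 1 * (s j) := by
        intro a; rw [pow_succ, mul_apply, Fin.sum_univ_two, hB]; simp
      have b2 : ∀ a : Fin 2, (B ^ (m+1)) a 1 = (B ^ m) a 0 * (-(s i)) + (B ^ m) a 1 * (-1) := by
        intro a; rw [pow_succ, mul_apply, Fin.sum_univ_two, hB]; simp
      rw [e1, e2, (hcol i).1, (hcol i).2, (hcol j).1, (hcol j).2, (ih k).1, (ih k).2]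
      simp only [if_pos rfl, if_neg hij, if_neg (Ne.symm hij)]
      by_cases hk : k = i
      · simp [hk, b1 0, b2 0]
      · by_cases hk' : k = j
        · simp [hk, hk', b1 1, b2 1, Ne.symm hij]
        · simp [hk, hk']
  -- Cayley–Hamilton for B and trace recurrence
  have hB2 : B * B = (-3 : ℝ) • B - 1 := by
    ext a b
    fin_cases a <;> fin_cases b <;>
      simp [hB, mul_apply, Fin.sum_univ_two] <;> nlinarith [hsij]
  have hrec : ∀ m, B ^ (m+2) = (-3 : ℝ) • B ^ (m+1) - B ^ m := by
    intro m
    rw [pow_succ, pow_succ, mul_assoc, hB2, Matrix.mul_sub, Matrix.mul_smul, mul_one,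
      ← pow_succ]
  set u : ℕ → ℝ := fun m => (-1 : ℝ) ^ m * ((B ^ m) 0 0 + (B ^ m) 1 1) with hu
  have hu0 : u 0 = 2 := by norm_num [hu]
  have hu1 : u 1 = 3 := by simp [hu, hB]; ring
  have hurec : ∀ m, u (m + 2) = 3 * u (m + 1) - u m := by
    intro m
    have h00 := congrFun (congrFun (hrec m) 0) 0
    have h11 := congrFun (congrFun (hrec m) 1) 1
    simp only [Matrix.sub_apply, Matrix.smul_apply, smul_eq_mul] at h00 h11
    simp only [hu, h00, h11, pow_succ]
    ring
  have aux : ∀ m, 2 ≤ u m ∧ u m + 1 ≤ u (m + 1) := by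
    intro m
    induction m with
    | zero => rw [hu0, hu1]; norm_num
    | succ m ih =>
      have := hurec m
      constructor <;> linarith [ih.1, ih.2]
  intro m hm hPm
  have h00 : (B ^ m) 0 0 = 1 := by
    have := (key m i).1
    rw [hPm] at this
    simpa [one_apply] using this.symm
  have h11 : (B ^ m) 1 1 = 1 := by
    have := (key m j).2
    rw [hPm] at this
    simpa [one_apply, hij, Ne.symm hij] using this.symm
  have hum : u m = (-1 : ℝ) ^ m * 2 := by rw [hu]; simp [h00, h11]; ring
  obtain ⟨k, rfl⟩ := Nat.exists_eq_succ_of_ne_zero hm.ne'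
  have h3 : 3 ≤ u (k + 1) := by
    have h1 := (aux k).1
    have h2 := (aux k).2
    linarith
  simp only [Nat.succ_eq_add_one] at hum
  rcases Nat.even_or_odd (k + 1) with he | ho
  · rw [he.neg_one_pow] at hum; simp at hum; linarith
  · rw [ho.neg_one_pow] at hum; linarith

end
end

section
/- Let n = 3, let A be the adjacency matrix of the complete graph on 3 vertices (a_{ij} = 1 for i ≠ j, a_{ii} = 0), and let s ≡ −1. Then the three Coxeter generators s_1, s_2, s_3 are invertible 3×3 real matrices, and the subgroup of GL(3, ℝ) they generate is isomorphic to the symmetric group on 4 letters; in particular, it is finite of order 24. -/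
/-!
The symmetric group `S_{n+1}` permutes the vertices `0, e_1, …, e_n` of the standard simplex
in `ℝⁿ` by affine maps, and taking linear parts gives a faithful representation
`S_{n+1} → GL_n(ℝ)`. Under it the transposition `(i, n+1)` goes to the Coxeter generator `s_i`
of the complete graph with all signs `−1`. Since these star transpositions generate `S_{n+1}`, the
group generated by `s_1, …, s_n` is isomorphic to `S_{n+1}`; for `n = 3` it is `S_4`, of order 24.
-/

open Matrix

noncomputable section

/-- Adjacency matrix of the complete graph on 3 vertices. -/
def K3 : Matrix (Fin 3) (Fin 3) ℝ := fun i j => if i = j then 0 else 1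

/-- The all-`−1` sign labeling. -/
def negSign : Fin 3 → ℝ := fun _ => -1

open Equiv

namespace Equiv.Perm

open Subgroup

variable {α : Type*} [DecidableEq α] [Finite α]

theorem closure_eq_top_of_swap_mem {S : Set (Perm α)} (c : α)
    (hS : ∀ a, swap a c ∈ closure S) : closure S = ⊤ := by
  rw [eq_top_iff, ← closure_isSwap, closure_le]
  rintro _ ⟨a, b, hab, rfl⟩
  by_cases hb : b = c
  · exact hb ▸ hS a
  by_cases ha : a = c
  · rw [ha, swap_comm]
    exact hS b
  rw [← swap_mul_swap_mul_swap hb hab.symm, swap_comm c a]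
  exact mul_mem (mul_mem (hS a) (hS b)) (hS a)

theorem closure_range_swap_castSucc_last (n : ℕ) :
    closure (Set.range fun i : Fin n => swap i.castSucc (Fin.last n)) = ⊤ :=
  closure_eq_top_of_swap_mem (Fin.last n) <| Fin.lastCases (by rw [swap_self]; exact one_mem _)
    fun i => subset_closure ⟨i, rfl⟩

end Equiv.Perm

variable {R : Type*} [Ring R] {n : ℕ}

def simplexVertex (a : Fin (n + 1)) : Fin n → R := fun i => if a = i.castSucc then 1 else 0

@[simp]
theorem simplexVertex_castSucc (j : Fin n) :
    simplexVertex j.castSucc = Pi.single (M := fun _ => R) j 1 := by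
  ext i
  simp [simplexVertex, Pi.single_apply, eq_comm]

@[simp]
theorem simplexVertex_last : simplexVertex (Fin.last n) = (0 : Fin n → R) := by
  ext i
  simp [simplexVertex, (Fin.castSucc_lt_last i).ne']

theorem simplexVertex_injective [Nontrivial R] :
    Function.Injective (simplexVertex : Fin (n + 1) → Fin n → R) := by
  intro a b h
  induction a using Fin.lastCases with
  | last => induction b using Fin.lastCases with
    | last => rfl
    | cast j => simpa using congr_fun h j
  | cast i => induction b using Fin.lastCases with
    | last => simpa using congr_fun h i
    | cast j => simpa [Pi.single_apply] using congr_fun h i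

/-- The linear part of the affine map sending each vertex `simplexVertex a` to
`simplexVertex (σ a)`. -/
def simplexMatrix (σ : Perm (Fin (n + 1))) : Matrix (Fin n) (Fin n) R :=
  Matrix.of fun i j => simplexVertex (σ j.castSucc) i - simplexVertex (σ (Fin.last n)) i

theorem simplexMatrix_mulVec_simplexVertex (σ : Perm (Fin (n + 1))) (a : Fin (n + 1)) :
    (simplexMatrix σ : Matrix (Fin n) (Fin n) R) *ᵥ simplexVertex a =
      simplexVertex (σ a) - simplexVertex (σ (Fin.last n)) := by
  induction a using Fin.lastCases with
  | last => simp
  | cast j =>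
    ext i
    simp [simplexMatrix]

theorem simplexMatrix_mul (σ τ : Perm (Fin (n + 1))) :
    (simplexMatrix (σ * τ) : Matrix (Fin n) (Fin n) R) = simplexMatrix σ * simplexMatrix τ := by
  refine ext_of_mulVec_single fun j => ?_
  simp only [← simplexVertex_castSucc, ← mulVec_mulVec, simplexMatrix_mulVec_simplexVertex,
    mulVec_sub, Perm.mul_apply]
  abel

theorem simplexMatrix_one : (simplexMatrix 1 : Matrix (Fin n) (Fin n) R) = 1 :=
  ext_of_mulVec_single fun j => by
    simp only [← simplexVertex_castSucc, simplexMatrix_mulVec_simplexVertex, one_mulVec,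
      Perm.one_apply, simplexVertex_last, sub_zero]

def simplexRep : Perm (Fin (n + 1)) →* GL (Fin n) R :=
  MonoidHom.toHomUnits
    { toFun := simplexMatrix, map_one' := simplexMatrix_one, map_mul' := simplexMatrix_mul }

@[simp]
theorem coe_simplexRep (σ : Perm (Fin (n + 1))) :
    ((simplexRep σ : GL (Fin n) R) : Matrix (Fin n) (Fin n) R) = simplexMatrix σ :=
  rfl

theorem simplexRep_injective [CharZero R] :
    Function.Injective (simplexRep : Perm (Fin (n + 1)) →* GL (Fin n) R) := by
  refine (injective_iff_map_eq_one _).2 fun σ hσ => ?_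
  have h : ∀ a, simplexVertex (σ a) - simplexVertex (σ (Fin.last n)) =
      (simplexVertex a : Fin n → R) := by
    intro a
    rw [← simplexMatrix_mulVec_simplexVertex, ← coe_simplexRep, hσ, Units.val_one, one_mulVec]
  -- Otherwise `h` at `σ⁻¹ (last n)` writes `-e_i` as a vertex, whose entries lie in `{0, 1}`.
  have hlast : σ (Fin.last n) = Fin.last n := by
    by_contra hne
    obtain ⟨i, hi⟩ := Fin.exists_castSucc_eq.2 hne
    have := congr_fun (h (σ⁻¹ (Fin.last n))) i
    simp only [Perm.coe_inv, apply_symm_apply, simplexVertex_last, ← hi, zero_sub, Pi.neg_apply,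
      simplexVertex, if_true] at this
    split_ifs at this <;> norm_num at this
  ext a : 1
  exact simplexVertex_injective (R := R) (by simpa [hlast] using h a)

theorem closure_range_simplexRep_swap_last :
    Subgroup.closure (Set.range fun i : Fin n =>
      (simplexRep (swap i.castSucc (Fin.last n)) : GL (Fin n) R)) = simplexRep.range := by
  rw [MonoidHom.range_eq_map, ← Perm.closure_range_swap_castSucc_last, MonoidHom.map_closure,
    ← Set.range_comp]
  rfl

theorem simplexMatrix_swap_last (i : Fin n) :
    simplexMatrix (swap i.castSucc (Fin.last n)) =
      coxGen n ((SimpleGraph.completeGraph (Fin n)).adjMatrix ℝ) (fun _ => -1) i := by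
  ext j k
  simp only [simplexMatrix, coxGen, simplexVertex, of_apply, SimpleGraph.adjMatrix_apply,
    SimpleGraph.top_adj, swap_apply_def]
  grind [Fin.castSucc_inj, Fin.castSucc_ne_last]

theorem K3_eq_adjMatrix_completeGraph :
    K3 = (SimpleGraph.completeGraph (Fin 3)).adjMatrix ℝ := by
  ext i j
  simp [K3]

theorem stmt_8 :
    (∀ i : Fin 3, IsUnit (coxGen 3 K3 negSign i)) ∧
    ∃ u : Fin 3 → GL (Fin 3) ℝ,
      (∀ i : Fin 3, (u i : Matrix (Fin 3) (Fin 3) ℝ) = coxGen 3 K3 negSign i) ∧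
      Nonempty ((Subgroup.closure (Set.range u) : Subgroup (GL (Fin 3) ℝ))
        ≃* Equiv.Perm (Fin 4)) ∧
      Nat.card (Subgroup.closure (Set.range u) : Subgroup (GL (Fin 3) ℝ)) = 24 := by
  let u : Fin 3 → GL (Fin 3) ℝ := fun i => simplexRep (swap i.castSucc (Fin.last 3))
  have hu : ∀ i, (u i : Matrix (Fin 3) (Fin 3) ℝ) = coxGen 3 K3 negSign i := fun i => by
    rw [coe_simplexRep, simplexMatrix_swap_last, K3_eq_adjMatrix_completeGraph]; rfl
  let e : Subgroup.closure (Set.range u) ≃* Perm (Fin 4) :=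
    (MulEquiv.subgroupCongr closure_range_simplexRep_swap_last).trans
      (MonoidHom.ofInjective simplexRep_injective).symm
  refine ⟨fun i => hu i ▸ (u i).isUnit, u, hu, ⟨e⟩, ?_⟩
  rw [Nat.card_congr e.toEquiv, Nat.card_perm, Nat.card_fin]
  rfl

end
end

section
/- With the notation below, let (Γ, 1) be a positively signed (s ≡ +1) bipartite Coxeter graph with bipartite ordering, and let μ be the spectral radius of the adjacency matrix A. If |μ² − 2| ≤ 2 (equivalently μ ≤ 2), then the spectral radius of the Coxeter element ω_{Γ,1} equals 1; otherwise (μ > 2), the spectral radius of ω_{Γ,1} equals ((μ² − 2) + √((μ² − 2)² − 4))/2, which is the bipartite eigenvalue β_Γ. -/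
open Matrix

noncomputable section

/-- The Coxeter generator `s_i` (positively signed, `s ≡ +1`): it agrees with
the identity except in row `i`, where `(s_i)_{ii} = −1` and
`(s_i)_{ij} = a_{ij}` for `j ≠ i`. -/
def coxGenPos (n : ℕ) (A : Matrix (Fin n) (Fin n) ℝ) (i : Fin n) :
    Matrix (Fin n) (Fin n) ℝ :=
  fun j k =>
    if j = i then (if k = i then -1 else A i k)
    else (if j = k then 1 else 0)

/-- The Coxeter element `ω_{Γ,1} = s_1 ⋯ s_n`. -/
def coxElt (n : ℕ) (A : Matrix (Fin n) (Fin n) ℝ) : Matrix (Fin n) (Fin n) ℝ :=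
  ((List.finRange n).map (coxGenPos n A)).prod

/-- The spectral radius of a real square matrix: the maximum of `|z|` over the
complex roots `z` of its characteristic polynomial. -/
def specRad (n : ℕ) (M : Matrix (Fin n) (Fin n) ℝ) : ℝ :=
  sSup ((fun z : ℂ => ‖z‖) '' {z : ℂ | (M.charpoly.map (algebraMap ℝ ℂ)).IsRoot z})

/-- The bipartite eigenvalue `β_Γ`: the maximum modulus of the complex roots of
`x² − (2 − μ²)x + 1`, where `μ` is the spectral radius of the adjacency matrix. -/
def bipEig (μ : ℝ) : ℝ :=
  sSup ((fun z : ℂ => ‖z‖) '' {z : ℂ | z ^ 2 - (2 - (μ : ℂ) ^ 2) * z + 1 = 0})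

/-!
Let `P` be the diagonal projection onto the first part `s` of the bipartition and
`E(P) = 1 + P (A - 2)`; the generator `s_i` is `E` of the projection onto `{i}`. Since both parts
are independent, the generators of a part multiply to `E` of its projection, so `ω = E₁ E₂` with
`E₁² = E₂² = 1` and `E₁ + E₂ = A`. Hence `w² - ω = E₁ ((w² + 1) E₁ - A)`, and rescaling the
coordinates in `s` by `w` turns `(w² + 1) E₁ - A` into `w ((w + w⁻¹) - A)` up to invertible diagonal
factors. So `w²` is an eigenvalue of `ω` iff `w + w⁻¹` is an eigenvalue of `A`: the eigenvalues of
`ω` are the roots of `z² - (λ² - 2) z + 1` for the (real) eigenvalues `λ` of `A`. The roots of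
`z² - c z + 1` have modulus `1` if `|c| ≤ 2`, and the larger modulus is `(|c| + √(c² - 4)) / 2`
otherwise; as `c = λ² - 2 ≥ -2`, this radius is largest at `λ = ±μ`.
-/

section CoxeterReflection

variable {R : Type*} [Ring R]

def coxeterRefl (P A : R) : R := 1 + P * (A - 2)

theorem coxeterRefl_zero (A : R) : coxeterRefl 0 A = 1 := by
  simp [coxeterRefl]

theorem coxeterRefl_mul_coxeterRefl {P Q A : R} (hPQ : P * Q = 0) (hPAQ : P * A * Q = 0) :
    coxeterRefl P A * coxeterRefl Q A = coxeterRefl (P + Q) A := by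
  have h : P * (A - 2) * Q = 0 := by simp [mul_sub, sub_mul, mul_two, add_mul, hPQ, hPAQ]
  calc coxeterRefl P A * coxeterRefl Q A
      = 1 + (P + Q) * (A - 2) + P * (A - 2) * Q * (A - 2) := by
        simp only [coxeterRefl]; noncomm_ring
    _ = coxeterRefl (P + Q) A := by rw [h, zero_mul, add_zero, coxeterRefl]

theorem coxeterRefl_mul_self {P A : R} (hPP : P * P = P) (hPAP : P * A * P = 0) :
    coxeterRefl P A * coxeterRefl P A = 1 := by
  have h : P * (A - 2) * P = -2 * P := by
    simp [mul_sub, sub_mul, mul_two, two_mul, add_mul, hPP, hPAP]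
  calc coxeterRefl P A * coxeterRefl P A
      = 1 + 2 * P * (A - 2) + P * (A - 2) * P * (A - 2) := by
        simp only [coxeterRefl]; noncomm_ring
    _ = 1 := by rw [h]; noncomm_ring

theorem coxeterRefl_add_coxeterRefl_one_sub (P A : R) :
    coxeterRefl P A + coxeterRefl (1 - P) A = A := by
  simp only [coxeterRefl]; noncomm_ring

theorem map_coxeterRefl {S : Type*} [Ring S] (f : R →+* S) (P A : R) :
    f (coxeterRefl P A) = coxeterRefl (f P) (f A) := by
  simp [coxeterRefl, map_ofNat]

end CoxeterReflection

namespace Matrix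

variable {ι R : Type*} [DecidableEq ι] [Ring R]

def partProj (s : Finset ι) : Matrix ι ι R := diagonal fun i => if i ∈ s then 1 else 0

def IsBipartite (A : Matrix ι ι R) (s : Finset ι) : Prop :=
  ∀ i j, (i ∈ s ↔ j ∈ s) → A i j = 0

theorem IsBipartite.compl [Fintype ι] {A : Matrix ι ι R} {s : Finset ι} (hA : A.IsBipartite s) :
    A.IsBipartite sᶜ := fun i j hij => hA i j (by simpa [not_iff_not] using hij)

@[simp]
theorem partProj_empty : (partProj ∅ : Matrix ι ι R) = 0 := by
  simp [partProj]

theorem partProj_mul_partProj [Fintype ι] (s t : Finset ι) :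
    (partProj s * partProj t : Matrix ι ι R) = partProj (s ∩ t) := by
  simp only [partProj, diagonal_mul_diagonal, Finset.mem_inter, ite_zero_mul_ite_zero, mul_one]

theorem partProj_add_partProj {s t : Finset ι} (h : Disjoint s t) :
    (partProj s + partProj t : Matrix ι ι R) = partProj (s ∪ t) := by
  ext i j
  by_cases hs : i ∈ s
  · simp [partProj, diagonal_apply, hs, Finset.disjoint_left.mp h hs]
  · by_cases ht : i ∈ t <;> simp [partProj, diagonal_apply, hs, ht]

theorem partProj_compl [Fintype ι] (s : Finset ι) :
    (partProj sᶜ : Matrix ι ι R) = 1 - partProj s := by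
  ext i j
  by_cases hs : i ∈ s <;> simp [partProj, diagonal_apply, one_apply, hs]

theorem partProj_mul_mul_partProj_eq_zero [Fintype ι] {s t : Finset ι} {A : Matrix ι ι R}
    (h : ∀ i ∈ s, ∀ j ∈ t, A i j = 0) : partProj s * A * partProj t = 0 := by
  ext i j
  by_cases hs : i ∈ s <;> by_cases ht : j ∈ t <;> simp [partProj, hs, ht, h]

theorem coxeterRefl_partProj_apply [Fintype ι] (s : Finset ι) (A : Matrix ι ι R) (i j : ι) :
    coxeterRefl (partProj s) A i j =
      if i ∈ s then A i j - (1 : Matrix ι ι R) i j else (1 : Matrix ι ι R) i j := by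
  rcases eq_or_ne i j with rfl | hij <;> by_cases hs : i ∈ s <;>
    simp [coxeterRefl, partProj, ofNat_apply, *]
  rw [← one_add_one_eq_two]; abel

theorem IsBipartite.coxeterRefl_partProj_mul_self [Fintype ι] {A : Matrix ι ι R} {s : Finset ι}
    (hA : A.IsBipartite s) : coxeterRefl (partProj s) A * coxeterRefl (partProj s) A = 1 :=
  coxeterRefl_mul_self (by rw [partProj_mul_partProj, Finset.inter_self])
    (partProj_mul_mul_partProj_eq_zero fun i hi j hj => hA i j (iff_of_true hi hj))

theorem prod_map_coxeterRefl_partProj_singleton [Fintype ι] {A : Matrix ι ι R} {l : List ι}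
    (hl : l.Pairwise fun i j => i ≠ j ∧ A i j = 0) :
    (l.map fun i => coxeterRefl (partProj {i}) A).prod = coxeterRefl (partProj l.toFinset) A := by
  induction l with
  | nil => simp [coxeterRefl_zero]
  | cons i l ih =>
    obtain ⟨hi, hl⟩ := List.pairwise_cons.mp hl
    have hil : i ∉ l.toFinset := fun h => (hi i (List.mem_toFinset.mp h)).1 rfl
    rw [List.map_cons, List.prod_cons, ih hl, coxeterRefl_mul_coxeterRefl, partProj_add_partProj,
      List.toFinset_cons, Finset.insert_eq]
    · exact Finset.disjoint_singleton_left.mpr hil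
    · rw [partProj_mul_partProj, Finset.singleton_inter_of_notMem hil, partProj_empty]
    · refine partProj_mul_mul_partProj_eq_zero fun a ha b hb => ?_
      rw [Finset.mem_singleton.mp ha]
      exact (hi b (List.mem_toFinset.mp hb)).2

end Matrix

theorem List.mem_take_finRange {n k : ℕ} (i : Fin n) :
    i ∈ (List.finRange n).take k ↔ (i : ℕ) < k := by
  simp [List.mem_take_iff_idxOf_lt (List.mem_finRange i)]

theorem List.mem_drop_finRange {n k : ℕ} (i : Fin n) :
    i ∈ (List.finRange n).drop k ↔ k ≤ (i : ℕ) := by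
  simp only [List.mem_drop_iff_getElem, List.getElem_finRange, List.length_finRange, Fin.ext_iff,
    Fin.val_cast]
  constructor
  · rintro ⟨j, hj, h⟩; rw [← h]; simp
  · intro h; exact ⟨i - k, by omega, by omega⟩

theorem coxGenPos_eq_coxeterRefl {n : ℕ} {A : Matrix (Fin n) (Fin n) ℝ} {i : Fin n}
    (hi : A i i = 0) : coxGenPos n A i = coxeterRefl (partProj {i}) A := by
  ext j k
  rw [coxeterRefl_partProj_apply]
  rcases eq_or_ne j i with rfl | hji
  · rcases eq_or_ne k j with rfl | hkj <;> simp [coxGenPos, one_apply, *, Ne.symm]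
  · simp [coxGenPos, one_apply, hji]

theorem coxElt_eq_coxeterRefl_mul {n k : ℕ} {A : Matrix (Fin n) (Fin n) ℝ}
    (hA : A.IsBipartite {i | (i : ℕ) < k}) :
    coxElt n A = coxeterRefl (partProj ({i | (i : ℕ) < k} : Finset (Fin n))) A *
      coxeterRefl (partProj ({i | (i : ℕ) < k} : Finset (Fin n))ᶜ) A := by
  have hA' : ∀ i j : Fin n, ((i : ℕ) < k ↔ (j : ℕ) < k) → A i j = 0 := by
    simpa [IsBipartite] using hA
  have hgen : coxGenPos n A = fun i => coxeterRefl (partProj {i}) A :=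
    funext fun i => coxGenPos_eq_coxeterRefl (hA' i i Iff.rfl)
  have hnodup := List.nodup_finRange n
  rw [coxElt, hgen, ← List.take_append_drop k (List.finRange n), List.map_append,
    List.prod_append, prod_map_coxeterRefl_partProj_singleton,
    prod_map_coxeterRefl_partProj_singleton]
  · congr 3 <;> ext i <;> simp [List.mem_take_finRange, List.mem_drop_finRange]
  · refine (hnodup.sublist (List.drop_sublist _ _)).imp_of_mem fun hi hj hij => ⟨hij, hA' _ _ ?_⟩
    rw [List.mem_drop_finRange] at hi hj
    omega
  · refine (hnodup.sublist (List.take_sublist _ _)).imp_of_mem fun hi hj hij => ⟨hij, hA' _ _ ?_⟩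
    rw [List.mem_take_finRange] at hi hj
    omega

theorem exists_sq_eq_and_add_inv_eq {K : Type*} [Field K] [IsAlgClosed K] {t z : K}
    (h : z ^ 2 - (t ^ 2 - 2) * z + 1 = 0) : ∃ w : K, w ≠ 0 ∧ w ^ 2 = z ∧ w + w⁻¹ = t := by
  have hz : z ≠ 0 := by rintro rfl; norm_num at h
  obtain ⟨w, rfl⟩ := IsAlgClosed.exists_pow_nat_eq z two_pos
  have hw : w ≠ 0 := by rintro rfl; simp at hz
  have hsq : (w + w⁻¹) ^ 2 = t ^ 2 := by
    field_simp
    linear_combination h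
  rcases sq_eq_sq_iff_eq_or_eq_neg.mp hsq with hpos | hneg
  · exact ⟨w, hw, rfl, hpos⟩
  · exact ⟨-w, neg_ne_zero.mpr hw, neg_sq w, by rw [inv_neg, ← neg_add, hneg, neg_neg]⟩

namespace Matrix.IsBipartite

variable {ι K : Type*} [Fintype ι] [DecidableEq ι] [Field K] {s : Finset ι} {A : Matrix ι ι K}

theorem smul_coxeterRefl_sub_mul_diagonal (hA : A.IsBipartite s) (w : K) :
    ((w ^ 2 + 1) • coxeterRefl (partProj s) A - A) * diagonal (fun i => if i ∈ s then w else 1) =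
      diagonal (fun i => if i ∈ s then -w else 1) * ((w ^ 2 + 1) • 1 - w • A) := by
  ext i j
  simp only [mul_diagonal, diagonal_mul, sub_apply, smul_apply, coxeterRefl_partProj_apply,
    one_apply, smul_eq_mul]
  by_cases hi : i ∈ s <;> by_cases hj : j ∈ s <;> rcases eq_or_ne i j with rfl | hij <;>
    simp_all [IsBipartite] <;> ring

theorem det_sq_smul_one_sub_coxeterRefl_mul_eq_zero_iff (hA : A.IsBipartite s) {w : K}
    (hw : w ≠ 0) :
    det (w ^ 2 • (1 : Matrix ι ι K) -
        coxeterRefl (partProj s) A * coxeterRefl (partProj sᶜ) A) = 0 ↔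
      det ((w + w⁻¹) • (1 : Matrix ι ι K) - A) = 0 := by
  set E := coxeterRefl (partProj s) A
  have hEE : E * E = 1 := hA.coxeterRefl_partProj_mul_self
  have hE₂ : coxeterRefl (partProj sᶜ) A = A - E := by
    rw [partProj_compl, eq_sub_iff_add_eq', coxeterRefl_add_coxeterRefl_one_sub]
  have hfactor : w ^ 2 • (1 : Matrix ι ι K) - E * (A - E) = E * ((w ^ 2 + 1) • E - A) := by
    rw [mul_sub, mul_sub, mul_smul_comm, hEE, add_smul, one_smul]
    abel
  have hscale : (w ^ 2 + 1) • (1 : Matrix ι ι K) - w • A = w • ((w + w⁻¹) • 1 - A) := by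
    rw [smul_sub, smul_smul, mul_add, ← sq, mul_inv_cancel₀ hw]
  have hdiag (c : K) (hc : c ≠ 0) : det (diagonal fun i => if i ∈ s then c else 1) ≠ 0 := by
    simp [det_diagonal, hc]
  have hdet := congrArg det (hA.smul_coxeterRefl_sub_mul_diagonal w)
  rw [det_mul, det_mul, hscale, det_smul] at hdet
  rw [hE₂, hfactor, det_mul, mul_eq_zero, or_iff_right (isUnit_det_of_right_inverse hEE).ne_zero,
    ← mul_eq_zero_iff_right (hdiag w hw), hdet,
    mul_eq_zero_iff_left (hdiag (-w) (neg_ne_zero.mpr hw)), mul_eq_zero_iff_left (pow_ne_zero _ hw)]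

theorem det_smul_one_sub_coxeterRefl_mul_eq_zero_iff [IsAlgClosed K] (hA : A.IsBipartite s)
    (z : K) :
    det (z • (1 : Matrix ι ι K) - coxeterRefl (partProj s) A * coxeterRefl (partProj sᶜ) A) = 0 ↔
      ∃ t : K, det (t • (1 : Matrix ι ι K) - A) = 0 ∧ z ^ 2 - (t ^ 2 - 2) * z + 1 = 0 := by
  set E₁ := coxeterRefl (partProj s) A
  set E₂ := coxeterRefl (partProj sᶜ) A
  constructor
  · intro hz
    have hz0 : z ≠ 0 := by
      rintro rfl
      have hunit : IsUnit (E₁ * E₂).det := isUnit_det_of_right_inverse (B := E₂ * E₁) (by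
        rw [mul_assoc, ← mul_assoc E₂, hA.compl.coxeterRefl_partProj_mul_self, one_mul,
          hA.coxeterRefl_partProj_mul_self])
      rw [zero_smul, zero_sub, det_neg, mul_eq_zero] at hz
      exact hz.elim (pow_ne_zero _ (by norm_num)) hunit.ne_zero
    obtain ⟨w, rfl⟩ := IsAlgClosed.exists_pow_nat_eq z two_pos
    have hw : w ≠ 0 := by rintro rfl; simp at hz0
    refine ⟨w + w⁻¹, (hA.det_sq_smul_one_sub_coxeterRefl_mul_eq_zero_iff hw).mp hz, ?_⟩
    field_simp
    ring
  · rintro ⟨t, ht, hzt⟩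
    obtain ⟨w, hw, rfl, rfl⟩ := exists_sq_eq_and_add_inv_eq hzt
    exact (hA.det_sq_smul_one_sub_coxeterRefl_mul_eq_zero_iff hw).mpr ht

end Matrix.IsBipartite

theorem Matrix.isRoot_charpoly_map_iff {ι R S : Type*} [Fintype ι] [DecidableEq ι] [CommRing R]
    [CommRing S] (f : R →+* S) (M : Matrix ι ι R) (z : S) :
    (M.charpoly.map f).IsRoot z ↔ det (z • (1 : Matrix ι ι S) - M.map f) = 0 := by
  rw [← charpoly_map, Polynomial.IsRoot, eval_charpoly, scalar_apply, smul_one_eq_diagonal]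

theorem Matrix.IsHermitian.isRoot_charpoly_map_complex_iff {ι : Type*} [Fintype ι]
    [DecidableEq ι] {A : Matrix ι ι ℝ} (hA : A.IsHermitian) (z : ℂ) :
    (A.charpoly.map (algebraMap ℝ ℂ)).IsRoot z ↔ ∃ i, z = hA.eigenvalues i := by
  rw [hA.charpoly_eq]
  simp [Finset.prod_eq_zero_iff, sub_eq_zero]

theorem isRoot_charpoly_coxElt_iff {n k : ℕ} {A : Matrix (Fin n) (Fin n) ℝ}
    (hA : A.IsBipartite {i | (i : ℕ) < k}) (z : ℂ) :
    ((coxElt n A).charpoly.map (algebraMap ℝ ℂ)).IsRoot z ↔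
      ∃ t, (A.charpoly.map (algebraMap ℝ ℂ)).IsRoot t ∧ z ^ 2 - (t ^ 2 - 2) * z + 1 = 0 := by
  set f := algebraMap ℝ ℂ
  set s : Finset (Fin n) := {i | (i : ℕ) < k}
  have hmap : (coxElt n A).map f =
      coxeterRefl (partProj s) (A.map f) * coxeterRefl (partProj sᶜ) (A.map f) := by
    simp only [coxElt_eq_coxeterRefl_mul hA, ← RingHom.mapMatrix_apply, map_mul, map_coxeterRefl]
    simp [partProj, s]
  have hAf : (A.map f).IsBipartite s := fun i j hij => by simp [hA i j hij]
  simp_rw [isRoot_charpoly_map_iff, hmap]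
  exact hAf.det_smul_one_sub_coxeterRefl_mul_eq_zero_iff z

theorem max_abs_add_abs_sub_of_nonneg {α : Type*} [Field α] [LinearOrder α]
    [IsStrictOrderedRing α] (a : α) {b : α} (hb : 0 ≤ b) : max |a + b| |a - b| = |a| + b := by
  rcases le_total 0 a with ha | ha
  · rw [abs_of_nonneg ha, abs_of_nonneg (add_nonneg ha hb),
      max_eq_left (abs_sub_le_iff.mpr ⟨by linarith, by linarith⟩)]
  · rw [abs_of_nonpos ha, abs_of_nonpos (by linarith : a - b ≤ 0),
      max_eq_right (abs_le.mpr ⟨by linarith, by linarith⟩), neg_sub, sub_eq_add_neg, add_comm]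

theorem sq_sub_mul_add_one_eq_zero_iff {c d : ℂ} (hd : d * d = c ^ 2 - 4) (z : ℂ) :
    z ^ 2 - c * z + 1 = 0 ↔ z = (c + d) / 2 ∨ z = (c - d) / 2 := by
  have h := quadratic_eq_zero_iff one_ne_zero (b := -c) (c := 1) (s := d)
    (by rw [discrim, hd]; ring) z
  simp only [neg_neg, mul_one, one_mul] at h
  rw [← h]
  ring_nf

theorem image_norm_setOf_sq_sub_mul_add_one_eq_zero {c d : ℂ} (hd : d * d = c ^ 2 - 4) :
    (fun z : ℂ => ‖z‖) '' {z | z ^ 2 - c * z + 1 = 0} = {‖(c + d) / 2‖, ‖(c - d) / 2‖} := by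
  rw [← Set.image_pair]
  congr 1
  ext z
  exact sq_sub_mul_add_one_eq_zero_iff hd z

def quadRootRadius (c : ℝ) : ℝ := if |c| ≤ 2 then 1 else (|c| + √(c ^ 2 - 4)) / 2

theorem isGreatest_norm_setOf_sq_sub_mul_add_one_eq_zero (c : ℝ) :
    IsGreatest ((fun z : ℂ => ‖z‖) '' {z | z ^ 2 - c * z + 1 = 0}) (quadRootRadius c) := by
  rw [quadRootRadius]
  split_ifs with hc
  · have hsq : √(4 - c ^ 2) ^ 2 = 4 - c ^ 2 := Real.sq_sqrt (by nlinarith [abs_le.mp hc])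
    have hd : ((√(4 - c ^ 2) : ℂ) * Complex.I) * (√(4 - c ^ 2) * Complex.I) = (c : ℂ) ^ 2 - 4 := by
      rw [mul_mul_mul_comm, ← Complex.ofReal_mul, ← sq, hsq, Complex.I_mul_I]
      push_cast; ring
    have hnorm (y : ℝ) (hy : y ^ 2 = 4 - c ^ 2) : ‖((c : ℂ) + y * Complex.I) / 2‖ = 1 := by
      rw [norm_div, Complex.norm_add_mul_I, hy]
      norm_num
    have hneg : (c : ℂ) - √(4 - c ^ 2) * Complex.I = c + ((-√(4 - c ^ 2) : ℝ) : ℂ) * Complex.I := by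
      push_cast; ring
    rw [image_norm_setOf_sq_sub_mul_add_one_eq_zero hd, hneg, hnorm _ hsq,
      hnorm _ (by rw [neg_sq, hsq]), Set.pair_eq_singleton]
    exact isGreatest_singleton
  · have h4 : 0 ≤ c ^ 2 - 4 := by nlinarith [sq_abs c, not_le.mp hc]
    have hd : (√(c ^ 2 - 4) : ℂ) * √(c ^ 2 - 4) = (c : ℂ) ^ 2 - 4 := by
      rw [← Complex.ofReal_mul, Real.mul_self_sqrt h4]; push_cast; ring
    rw [image_norm_setOf_sq_sub_mul_add_one_eq_zero hd, ← Complex.ofReal_add, ← Complex.ofReal_sub]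
    simp only [norm_div, Complex.norm_real, Real.norm_eq_abs, Complex.norm_two]
    rw [← max_abs_add_abs_sub_of_nonneg c (Real.sqrt_nonneg (c ^ 2 - 4)),
      ← max_div_div_right (zero_le_two (α := ℝ))]
    exact isGreatest_pair

theorem quadRootRadius_neg (c : ℝ) : quadRootRadius (-c) = quadRootRadius c := by
  simp [quadRootRadius]

theorem quadRootRadius_mono {c c' : ℝ} (hc : -2 ≤ c) (hcc' : c ≤ c') :
    quadRootRadius c ≤ quadRootRadius c' := by
  have hroot := Real.sqrt_nonneg (c' ^ 2 - 4)
  unfold quadRootRadius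
  split_ifs with h h' h'
  · rfl
  · linarith [not_le.mp h']
  · exact absurd (abs_le.mpr ⟨by linarith, by linarith [abs_le.mp h']⟩) h
  · have h2 : 2 < c := by cases abs_cases c <;> linarith [not_le.mp h]
    rw [abs_of_pos (by linarith), abs_of_pos (by linarith)]
    gcongr

theorem exists_specRad_eq_abs_eigenvalues {n : ℕ} (hn : 1 ≤ n) {A : Matrix (Fin n) (Fin n) ℝ}
    (hA : A.IsHermitian) :
    ∃ i₀, specRad n A = |hA.eigenvalues i₀| ∧ ∀ i, |hA.eigenvalues i| ≤ |hA.eigenvalues i₀| := by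
  have : Nonempty (Fin n) := ⟨⟨0, hn⟩⟩
  obtain ⟨i₀, hi₀⟩ := Finite.exists_max fun i => |hA.eigenvalues i|
  refine ⟨i₀, IsGreatest.csSup_eq ⟨⟨hA.eigenvalues i₀, ?_, ?_⟩, ?_⟩, hi₀⟩
  · exact (hA.isRoot_charpoly_map_complex_iff _).mpr ⟨i₀, rfl⟩
  · simp
  · rintro _ ⟨z, hz, rfl⟩
    obtain ⟨i, rfl⟩ := (hA.isRoot_charpoly_map_complex_iff z).mp hz
    simpa using hi₀ i

theorem specRad_coxElt {n k : ℕ} (hn : 1 ≤ n) {A : Matrix (Fin n) (Fin n) ℝ}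
    (hsym : ∀ i j, A i j = A j i) (hbip : A.IsBipartite {i | (i : ℕ) < k}) :
    specRad n (coxElt n A) = quadRootRadius (specRad n A ^ 2 - 2) := by
  have hA : A.IsHermitian := IsHermitian.ext fun i j => by simp [hsym i j]
  obtain ⟨i₀, hμ, hi₀⟩ := exists_specRad_eq_abs_eigenvalues hn hA
  set c : Fin n → ℝ := fun i => hA.eigenvalues i ^ 2 - 2
  have hroots (z : ℂ) : ((coxElt n A).charpoly.map (algebraMap ℝ ℂ)).IsRoot z ↔
      ∃ i, z ^ 2 - (c i : ℂ) * z + 1 = 0 := by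
    simp only [isRoot_charpoly_coxElt_iff hbip, hA.isRoot_charpoly_map_complex_iff]
    simp [c]
  have hradius (i : Fin n) := isGreatest_norm_setOf_sq_sub_mul_add_one_eq_zero (c i)
  rw [hμ, sq_abs]
  refine IsGreatest.csSup_eq ⟨?_, ?_⟩
  · obtain ⟨z, hz, hnorm⟩ := (hradius i₀).1
    exact ⟨z, (hroots z).mpr ⟨i₀, hz⟩, hnorm⟩
  · rintro _ ⟨z, hz, rfl⟩
    obtain ⟨i, hi⟩ := (hroots z).mp hz
    calc ‖z‖ ≤ quadRootRadius (c i) := (hradius i).2 ⟨z, hi, rfl⟩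
      _ ≤ quadRootRadius (c i₀) := quadRootRadius_mono (by simp [c]; positivity) (by
        simpa [c, sq_abs] using sq_le_sq.mpr (by simpa using hi₀ i))

theorem bipEig_eq_quadRootRadius (μ : ℝ) : bipEig μ = quadRootRadius (μ ^ 2 - 2) := by
  have h := (isGreatest_norm_setOf_sq_sub_mul_add_one_eq_zero (2 - μ ^ 2)).csSup_eq
  push_cast at h
  rw [bipEig, h, ← quadRootRadius_neg, neg_sub]

theorem stmt_11_general (n : ℕ) (hn : 1 ≤ n) (A : Matrix (Fin n) (Fin n) ℝ)
    (hsym : ∀ i j, A i j = A j i)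
    (k₁ : ℕ)
    (hbip : ∀ i j : Fin n, ((i : ℕ) < k₁ ↔ (j : ℕ) < k₁) → A i j = 0)
    (μ : ℝ) (hμ : μ = specRad n A) :
    (|μ ^ 2 - 2| ≤ 2 → specRad n (coxElt n A) = 1) ∧
    (2 < |μ ^ 2 - 2| →
      specRad n (coxElt n A) = ((μ ^ 2 - 2) + Real.sqrt ((μ ^ 2 - 2) ^ 2 - 4)) / 2 ∧
      specRad n (coxElt n A) = bipEig μ) := by
  have hω : specRad n (coxElt n A) = quadRootRadius (μ ^ 2 - 2) :=
    hμ ▸ specRad_coxElt hn hsym (by simpa [IsBipartite] using hbip)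
  refine ⟨fun h => by rw [hω, quadRootRadius, if_pos h], fun h => ⟨?_, ?_⟩⟩
  · have hpos : 0 < μ ^ 2 - 2 := by cases abs_cases (μ ^ 2 - 2) <;> nlinarith
    rw [hω, quadRootRadius, if_neg h.not_ge, abs_of_pos hpos]
  · rw [hω, bipEig_eq_quadRootRadius]

theorem stmt_11 (n : ℕ) (hn : 1 ≤ n) (A : Matrix (Fin n) (Fin n) ℝ)
    (hsym : ∀ i j, A i j = A j i) (hdiag : ∀ i, A i i = 0)
    (h01 : ∀ i j, A i j = 0 ∨ A i j = 1)
    (k₁ : ℕ) (hk₁ : 1 ≤ k₁) (hk₁n : k₁ < n)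
    (hbip : ∀ i j : Fin n, ((i : ℕ) < k₁ ↔ (j : ℕ) < k₁) → A i j = 0)
    (μ : ℝ) (hμ : μ = specRad n A) :
    (|μ ^ 2 - 2| ≤ 2 → specRad n (coxElt n A) = 1) ∧
    (2 < |μ ^ 2 - 2| →
      specRad n (coxElt n A) = ((μ ^ 2 - 2) + Real.sqrt ((μ ^ 2 - 2) ^ 2 - 4)) / 2 ∧
      specRad n (coxElt n A) = bipEig μ) :=
  stmt_11_general n hn A hsym k₁ hbip μ hμ

end
end

section
/- Let Q be a monic polynomial with integer coefficients of degree d ≥ 1, and for k ≥ 1 let P_k(x) = x^k Q(x) + Q*(x) be the associated Salem–Boyd sequence. If Q has at least one complex root of modulus strictly greater than 1 (i.e. the house |Q| > 1), then the houses of P_k converge to the house of Q: lim_{k→∞} |P_k| = |Q|. -/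
open Polynomial

noncomputable section

/-- The reciprocal polynomial `Q*(x) = x^d · Q(1/x)` of a polynomial of degree `d`. -/
def reciprocal (Q : Polynomial ℤ) : Polynomial ℤ :=
  Polynomial.reflect Q.natDegree Q

/-- The Salem–Boyd sequence `P_k(x) = x^k Q(x) + Q*(x)`. -/
def salemBoyd (Q : Polynomial ℤ) (k : ℕ) : Polynomial ℤ :=
  Polynomial.X ^ k * Q + reciprocal Q

/-- The house of an integer polynomial: the maximum of `|z|` over its complex
roots `z`. -/
def house (p : Polynomial ℤ) : ℝ :=
  sSup ((fun z : ℂ => ‖z‖) '' {z : ℂ | (p.map (Int.castRingHom ℂ)).IsRoot z})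

/-!
Let `M = house Q > 1` and `d = deg Q`. If `‖z‖ ≥ M + ε`, then `‖z ^ k Q(z)‖ ≥ ‖z‖ ^ k ε ^ d`
outgrows `‖Q*(z)‖ = O(‖z‖ ^ d)`, so for large `k` the polynomial `P_k` has no root there.
Conversely, take a root `α` of `Q` with `‖α‖ = M` and a small circle around `α` avoiding the
roots of `Q`. On it `‖z ^ k Q(z)‖` grows geometrically in `k`, while `P_k(α) = Q*(α)` does not
depend on `k`; by the minimum modulus principle `P_k` has a root inside the circle.
-/

section

open Metric Filter

theorem Polynomial.norm_eval_le_sum_norm_coeff_mul_pow {R : Type*} [SeminormedRing R]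
    [NormOneClass R] (p : R[X]) {z : R} (hz : 1 ≤ ‖z‖) :
    ‖p.eval z‖ ≤ (∑ i ∈ Finset.range (p.natDegree + 1), ‖p.coeff i‖) * ‖z‖ ^ p.natDegree := by
  rw [eval_eq_sum_range, Finset.sum_mul]
  refine (norm_sum_le _ _).trans (Finset.sum_le_sum fun i hi => ?_)
  calc ‖p.coeff i * z ^ i‖ ≤ ‖p.coeff i‖ * ‖z‖ ^ i :=
        (norm_mul_le _ _).trans (mul_le_mul_of_nonneg_left (norm_pow_le _ _) (norm_nonneg _))
    _ ≤ ‖p.coeff i‖ * ‖z‖ ^ p.natDegree :=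
        mul_le_mul_of_nonneg_left (pow_le_pow_right₀ hz (Finset.mem_range_succ_iff.mp hi))
          (norm_nonneg _)

theorem Polynomial.Monic.pow_natDegree_le_norm_eval {K : Type*} [NormedField K] [IsAlgClosed K]
    {f : K[X]} (hf : f.Monic) {M ε : ℝ} (hM : ∀ a, f.IsRoot a → ‖a‖ ≤ M) (hε : 0 ≤ ε)
    {z : K} (hz : M + ε ≤ ‖z‖) : ε ^ f.natDegree ≤ ‖f.eval z‖ := by
  have hsplit := IsAlgClosed.splits f
  rw [hsplit.eval_eq_prod_roots_of_monic hf, ← normHom_apply, map_multiset_prod, Multiset.map_map,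
    hsplit.natDegree_eq_card_roots, ← Multiset.prod_replicate, ← Multiset.map_const']
  refine Multiset.prod_map_le_prod_map₀ _ _ (fun _ _ => hε) fun a ha => ?_
  have := hM a (isRoot_of_mem_roots ha)
  have := norm_sub_norm_le z a
  simp only [Function.comp_apply, normHom_apply]
  linarith

theorem Polynomial.exists_mem_Ioo_forall_mem_sphere_not_isRoot {K : Type*} [NormedField K]
    {p : K[X]} (hp : p ≠ 0) (c : K) {ε : ℝ} (hε : 0 < ε) :
    ∃ r ∈ Set.Ioo 0 ε, ∀ z ∈ sphere c r, ¬p.IsRoot z := by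
  classical
  obtain ⟨r, hr, hrD⟩ :=
    (Set.Ioo_infinite hε).exists_notMem_finset (p.roots.toFinset.image (dist c))
  refine ⟨r, hr, fun z hz hroot => hrD (Finset.mem_image.2 ⟨z, ?_, ?_⟩)⟩
  · simpa [hp] using hroot
  · rw [dist_comm]; exact hz

theorem Complex.exists_mem_closedBall_eq_zero_of_lt_norm_sphere {f : ℂ → ℂ} {c : ℂ} {r B : ℝ}
    (hf : DifferentiableOn ℂ f (closedBall c r)) (hr : 0 < r)
    (hB : ∀ z ∈ sphere c r, B ≤ ‖f z‖) (hc : ‖f c‖ < B) : ∃ z ∈ closedBall c r, f z = 0 := by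
  by_contra! hzero
  have hfc : 0 < ‖f c‖ := norm_pos_iff.2 (hzero c (mem_closedBall_self hr.le))
  have hinv : ‖(f c)⁻¹‖ ≤ B⁻¹ := by
    refine Complex.norm_le_of_forall_mem_frontier_norm_le (f := fun z => (f z)⁻¹) isBounded_ball
      ?_ (fun z hz => ?_) (subset_closure (mem_ball_self hr))
    · refine DifferentiableOn.diffContOnCl ?_
      rw [closure_ball c hr.ne']
      exact hf.inv hzero
    · rw [frontier_ball c hr.ne'] at hz
      rw [norm_inv]
      exact inv_anti₀ (hfc.trans hc) (hB z hz)
  rw [norm_inv] at hinv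
  exact ((inv_le_inv₀ hfc (hfc.trans hc)).mp hinv).not_gt hc

theorem eventually_forall_isRoot_X_pow_mul_add_norm_lt {f g : ℂ[X]} (hf : f.Monic)
    (hg : g.natDegree ≤ f.natDegree) {M R : ℝ} (hM : ∀ a, f.IsRoot a → ‖a‖ ≤ M) (hMR : M < R)
    (hR : 1 < R) : ∀ᶠ k in atTop, ∀ z, (X ^ k * f + g).IsRoot z → ‖z‖ < R := by
  set d := f.natDegree
  set C := ∑ i ∈ Finset.range (g.natDegree + 1), ‖g.coeff i‖
  have htend : Tendsto (fun k => R ^ (k - d) * (R - M) ^ d) atTop atTop :=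
    ((tendsto_pow_atTop_atTop_of_one_lt hR).comp (tendsto_sub_atTop_nat d)).atTop_mul_const
      (pow_pos (sub_pos.2 hMR) d)
  filter_upwards [htend.eventually_gt_atTop C, eventually_ge_atTop d] with k hk hkd z hz
  by_contra! hzR
  have hz1 : 1 ≤ ‖z‖ := hR.le.trans hzR
  have hfz : z ^ k * f.eval z = -g.eval z := by
    rw [IsRoot, eval_add, eval_mul, eval_pow, eval_X] at hz
    exact eq_neg_of_add_eq_zero_left hz
  have hbound : ‖z‖ ^ (k - d) * (R - M) ^ d * ‖z‖ ^ d ≤ C * ‖z‖ ^ d := calc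
    _ = ‖z‖ ^ k * (R - M) ^ d := by rw [mul_right_comm, ← pow_add, Nat.sub_add_cancel hkd]
    _ ≤ ‖z‖ ^ k * ‖f.eval z‖ := by
      gcongr
      exact hf.pow_natDegree_le_norm_eval hM (sub_nonneg.2 hMR.le) (by linarith)
    _ = ‖g.eval z‖ := by rw [← norm_pow, ← norm_mul, hfz, norm_neg]
    _ ≤ C * ‖z‖ ^ g.natDegree := g.norm_eval_le_sum_norm_coeff_mul_pow hz1
    _ ≤ C * ‖z‖ ^ d := by gcongr
  have hRz : R ^ (k - d) * (R - M) ^ d ≤ ‖z‖ ^ (k - d) * (R - M) ^ d := by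
    gcongr
  linarith [le_of_mul_le_mul_right hbound (by positivity)]

theorem eventually_exists_isRoot_X_pow_mul_add_dist_lt {f : ℂ[X]} (hf : f ≠ 0) (g : ℂ[X])
    {α : ℂ} (hα : f.IsRoot α) (hα1 : 1 < ‖α‖) {r : ℝ} (hr : 0 < r) :
    ∀ᶠ k in atTop, ∃ z, (X ^ k * f + g).IsRoot z ∧ dist z α < r := by
  obtain ⟨s, ⟨hs0, hsr⟩, hsph⟩ :=
    Polynomial.exists_mem_Ioo_forall_mem_sphere_not_isRoot hf α (lt_min hr (sub_pos.2 hα1))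
  have hρ : 1 < ‖α‖ - s := by linarith [min_le_right r (‖α‖ - 1)]
  have hfar : ∀ z ∈ sphere α s, ‖α‖ - s ≤ ‖z‖ := fun z hz => by
    have := norm_sub_norm_le α z
    rw [← dist_eq_norm, dist_comm, mem_sphere.1 hz] at this
    linarith
  obtain ⟨w, hw, hwmin⟩ := (isCompact_sphere α s).exists_isMinOn
    (NormedSpace.sphere_nonempty.mpr hs0.le) (continuous_norm.comp f.continuous).continuousOn
  obtain ⟨C, hC⟩ := (isCompact_sphere α s).exists_bound_of_continuousOn g.continuous.continuousOn
  have hm : 0 < ‖f.eval w‖ := norm_pos_iff.2 (hsph w hw)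
  have htend : Tendsto (fun k => (‖α‖ - s) ^ k * ‖f.eval w‖) atTop atTop :=
    (tendsto_pow_atTop_atTop_of_one_lt hρ).atTop_mul_const hm
  filter_upwards [htend.eventually_gt_atTop (C + ‖g.eval α‖)] with k hk
  have hsphere : ∀ z ∈ sphere α s, (‖α‖ - s) ^ k * ‖f.eval w‖ - C ≤ ‖(X ^ k * f + g).eval z‖ := by
    intro z hz
    have hlead : (‖α‖ - s) ^ k * ‖f.eval w‖ ≤ ‖z ^ k * f.eval z‖ := by
      rw [norm_mul, norm_pow]
      exact mul_le_mul (pow_le_pow_left₀ (by linarith) (hfar z hz) k) (hwmin hz) hm.le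
        (by positivity)
    have htri := norm_add_le (z ^ k * f.eval z + g.eval z) (-g.eval z)
    rw [add_neg_cancel_right, norm_neg] at htri
    simp only [eval_add, eval_mul, eval_pow, eval_X]
    linarith [hC z hz]
  obtain ⟨z, hz, hz0⟩ := Complex.exists_mem_closedBall_eq_zero_of_lt_norm_sphere
    (X ^ k * f + g).differentiable.differentiableOn hs0 hsphere
    (by simp only [eval_add, eval_mul, hα.eq_zero, mul_zero, zero_add]; linarith)
  exact ⟨z, hz0, (mem_closedBall.1 hz).trans_lt (hsr.trans_le (min_le_left _ _))⟩

end

theorem norm_le_house {p : ℤ[X]} (hp : p.map (Int.castRingHom ℂ) ≠ 0) {z : ℂ}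
    (hz : (p.map (Int.castRingHom ℂ)).IsRoot z) : ‖z‖ ≤ house p :=
  le_csSup ((finite_setOfPred_isRoot hp).image _).bddAbove ⟨z, hz, rfl⟩

theorem house_le {p : ℤ[X]} {B : ℝ} (hB : 0 ≤ B)
    (h : ∀ z, (p.map (Int.castRingHom ℂ)).IsRoot z → ‖z‖ ≤ B) : house p ≤ B :=
  Real.sSup_le (by rintro _ ⟨z, hz, rfl⟩; exact h z hz) hB

theorem exists_isRoot_norm_eq_house {p : ℤ[X]} (hp : p.map (Int.castRingHom ℂ) ≠ 0) {z : ℂ}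
    (hz : (p.map (Int.castRingHom ℂ)).IsRoot z) :
    ∃ α, (p.map (Int.castRingHom ℂ)).IsRoot α ∧ ‖α‖ = house p :=
  (Set.Nonempty.image _ ⟨z, hz⟩).csSup_mem ((finite_setOfPred_isRoot hp).image _)

theorem map_salemBoyd (Q : ℤ[X]) (k : ℕ) :
    (salemBoyd Q k).map (Int.castRingHom ℂ) =
      X ^ k * Q.map (Int.castRingHom ℂ) + (reciprocal Q).map (Int.castRingHom ℂ) := by
  simp [salemBoyd, Polynomial.map_add, Polynomial.map_mul]

theorem natDegree_reciprocal_le (Q : ℤ[X]) : (reciprocal Q).natDegree ≤ Q.natDegree :=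
  natDegree_reflect_le.trans (max_self _).le

theorem Polynomial.Monic.salemBoyd {Q : ℤ[X]} (hQ : Q.Monic) {k : ℕ} (hk : 1 ≤ k) :
    (salemBoyd Q k).Monic := by
  refine ((monic_X_pow k).mul hQ).add_of_left (degree_lt_degree ?_)
  rw [(monic_X_pow k).natDegree_mul hQ, natDegree_X_pow]
  linarith [natDegree_reciprocal_le Q]

theorem stmt_14_general (Q : Polynomial ℤ) (hQ : Q.Monic)
    (hroot : ∃ z : ℂ, (Q.map (Int.castRingHom ℂ)).IsRoot z ∧ 1 < ‖z‖) :
    Filter.Tendsto (fun k : ℕ => house (salemBoyd Q k)) Filter.atTop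
      (nhds (house Q)) := by
  set φ := Int.castRingHom ℂ
  have hQφ : (Q.map φ).Monic := hQ.map φ
  have hroots (a : ℂ) (ha : (Q.map φ).IsRoot a) : ‖a‖ ≤ house Q := norm_le_house hQφ.ne_zero ha
  obtain ⟨z, hz, hz1⟩ := hroot
  have hM1 : 1 < house Q := hz1.trans_le (hroots z hz)
  obtain ⟨α, hα, hαM⟩ := exists_isRoot_norm_eq_house hQφ.ne_zero hz
  refine tendsto_order.2 ⟨fun a ha => ?_, fun b hb => ?_⟩
  · filter_upwards [eventually_exists_isRoot_X_pow_mul_add_dist_lt hQφ.ne_zero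
      ((reciprocal Q).map φ) hα (hαM ▸ hM1) (sub_pos.2 ha), Filter.eventually_ge_atTop 1]
      with k ⟨w, hw, hwα⟩ hk
    rw [← map_salemBoyd] at hw
    have := norm_sub_norm_le α w
    rw [← dist_eq_norm, dist_comm] at this
    linarith [norm_le_house ((hQ.salemBoyd hk).map φ).ne_zero hw]
  · have hdeg : ((reciprocal Q).map φ).natDegree ≤ (Q.map φ).natDegree := by
      rw [hQ.natDegree_map]
      exact natDegree_map_le.trans (natDegree_reciprocal_le Q)
    filter_upwards [eventually_forall_isRoot_X_pow_mul_add_norm_lt hQφ hdeg hroots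
      (left_lt_add_div_two.2 hb) (by linarith)] with k hk
    refine (house_le (by linarith) fun w hw => (hk w ?_).le).trans_lt (add_div_two_lt_right.2 hb)
    rwa [← map_salemBoyd]

theorem stmt_14 (Q : Polynomial ℤ) (hQ : Q.Monic) (hd : 1 ≤ Q.natDegree)
    (hroot : ∃ z : ℂ, (Q.map (Int.castRingHom ℂ)).IsRoot z ∧ 1 < ‖z‖) :
    Filter.Tendsto (fun k : ℕ => house (salemBoyd Q k)) Filter.atTop
      (nhds (house Q)) :=
  stmt_14_general Q hQ hroot

end
end
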